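/- Backdoor adjustment for a discrete structural causal model with an observed confounder: Let (Ω, P) be a probability space and let N, η, ε be mutually independent random variables taking values in finite types 𝒩, 𝒰, ℰ respectively. Define the treatment variable I = g(N, η) and the outcome variable O = f(I, N, ε) for measurable functions g : 𝒩 × 𝒰 → ℐ and f : ℐ × 𝒩 × ℰ → 𝒪, with ℐ, 𝒪 finite. Fix i ∈ ℐ and o ∈ 𝒪, and assume that P(I = i, N = n) > 0 for every n ∈ 𝒩 with P(N = n) > 0. Then the interventional probability of the outcome under do(I = i), namely P(f(i, N, ε) = o), equals the backdoor-adjusted sum over the confounder: P(f(i, N, ε) = o) = Σ_{n ∈ 𝒩} P(O = o | I = i, N = n) · P(N = n), where the sum ranges over n with P(N = n) > 0. -/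
import Mathlib


open MeasureTheory ProbabilityTheory
open scoped ENNReal Classical

lemma meas_pred' {Ω : Type*} [MeasurableSpace Ω] (μ : Measure Ω)
    {α : Type*} [Fintype α] [MeasurableSpace α] [MeasurableSingletonClass α]
    {X : Ω → α} (hX : Measurable X) (p : α → Prop) :
    μ {ω | p (X ω)} = ∑ a ∈ Finset.univ.filter p, μ {ω | X ω = a} := by
  have hset : {ω | p (X ω)} = ⋃ a ∈ Finset.univ.filter p, {ω | X ω = a} := by
    ext ω; simp
  rw [hset, measure_biUnion_finset]
  · intro a _ b _ hab
    refine Set.disjoint_left.2 fun ω h1 h2 => hab ?_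
    simp only [Set.mem_setOf_eq] at h1 h2; rw [← h1, ← h2]
  · intro a _; exact hX (measurableSet_singleton a)

lemma triple_indep {Ω : Type*} [MeasurableSpace Ω] (μ : Measure Ω)
    {𝒩 𝒰 ℰ : Type*}
    [Fintype 𝒩] [Fintype 𝒰] [Fintype ℰ]
    [MeasurableSpace 𝒩] [MeasurableSingletonClass 𝒩]
    [MeasurableSpace 𝒰] [MeasurableSingletonClass 𝒰]
    [MeasurableSpace ℰ] [MeasurableSingletonClass ℰ]
    {N : Ω → 𝒩} {η : Ω → 𝒰} {ε : Ω → ℰ}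
    (hN : Measurable N) (hη : Measurable η) (hε : Measurable ε)
    (h_indep : ∀ (n : 𝒩) (u : 𝒰) (e : ℰ),
      μ {ω | N ω = n ∧ η ω = u ∧ ε ω = e} =
        μ {ω | N ω = n} * μ {ω | η ω = u} * μ {ω | ε ω = e})
    (n : 𝒩) (p : 𝒰 → Prop) (q : ℰ → Prop) :
    μ {ω | N ω = n ∧ p (η ω) ∧ q (ε ω)} =
      μ {ω | N ω = n} * μ {ω | p (η ω)} * μ {ω | q (ε ω)} := by
  have hset : {ω | N ω = n ∧ p (η ω) ∧ q (ε ω)} =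
      ⋃ ue ∈ (Finset.univ.filter p) ×ˢ (Finset.univ.filter q),
        {ω | N ω = n ∧ η ω = ue.1 ∧ ε ω = ue.2} := by
    ext ω
    simp only [Set.mem_setOf_eq, Set.mem_iUnion, Finset.mem_product, Finset.mem_filter,
      Finset.mem_univ, true_and]
    constructor
    · rintro ⟨h1, h2, h3⟩; exact ⟨(η ω, ε ω), ⟨h2, h3⟩, h1, rfl, rfl⟩
    · rintro ⟨⟨u, e⟩, ⟨hu, he⟩, h1, h2, h3⟩; subst h2; subst h3; exact ⟨h1, hu, he⟩
  rw [hset, measure_biUnion_finset]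
  · rw [Finset.sum_product]
    simp only [h_indep]
    rw [meas_pred' μ hη p, meas_pred' μ hε q]
    simp only [Finset.mul_sum, Finset.sum_mul]
    exact Finset.sum_comm
  · rintro ⟨u, e⟩ _ ⟨u', e'⟩ _ hne
    refine Set.disjoint_left.2 fun ω h1 h2 => hne ?_
    simp only [Set.mem_setOf_eq] at h1 h2
    simp [Prod.ext_iff, ← h1.2.1, ← h1.2.2, h2.2.1, h2.2.2]
  · rintro ⟨u, e⟩ _
    exact (hN (measurableSet_singleton n)).inter
      ((hη (measurableSet_singleton u)).inter (hε (measurableSet_singleton e)))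

/-- **Backdoor adjustment** for a discrete structural causal model with an observed
confounder `N`.  The treatment is `I = g (N, η)`, the outcome is `O = f (I, N, ε)`,
where `N, η, ε` are mutually independent.  Then the interventional probability
`P(f (i, N, ε) = o)` equals the backdoor-adjusted sum
`∑_{n : P(N = n) > 0} P(O = o | I = i, N = n) · P(N = n)`. -/
theorem backdoor_adjustment
    {Ω : Type*} [MeasurableSpace Ω] (μ : Measure Ω) [IsProbabilityMeasure μ]
    {𝒩 𝒰 ℰ ℐ 𝒪 : Type*}
    [Fintype 𝒩] [Fintype 𝒰] [Fintype ℰ] [Fintype ℐ] [Fintype 𝒪]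
    [MeasurableSpace 𝒩] [MeasurableSingletonClass 𝒩]
    [MeasurableSpace 𝒰] [MeasurableSingletonClass 𝒰]
    [MeasurableSpace ℰ] [MeasurableSingletonClass ℰ]
    [MeasurableSpace ℐ] [MeasurableSingletonClass ℐ]
    [MeasurableSpace 𝒪] [MeasurableSingletonClass 𝒪]
    (N : Ω → 𝒩) (η : Ω → 𝒰) (ε : Ω → ℰ)
    (hN : Measurable N) (hη : Measurable η) (hε : Measurable ε)
    -- mutual independence of the exogenous variables `N`, `η`, `ε`
    (h_indep : ∀ (n : 𝒩) (u : 𝒰) (e : ℰ),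
      μ {ω | N ω = n ∧ η ω = u ∧ ε ω = e} =
        μ {ω | N ω = n} * μ {ω | η ω = u} * μ {ω | ε ω = e})
    (g : 𝒩 × 𝒰 → ℐ) (f : ℐ × 𝒩 × ℰ → 𝒪)
    (hg : Measurable g) (hf : Measurable f)
    (I : Ω → ℐ) (O : Ω → 𝒪)
    (hI : ∀ ω, I ω = g (N ω, η ω))
    (hO : ∀ ω, O ω = f (I ω, N ω, ε ω))
    (i : ℐ) (o : 𝒪)
    -- positivity: `P(I = i, N = n) > 0` for every `n` with `P(N = n) > 0`
    (hpos : ∀ n : 𝒩, 0 < μ {ω | N ω = n} → 0 < μ {ω | I ω = i ∧ N ω = n}) :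
    μ {ω | f (i, N ω, ε ω) = o} =
      ∑ n ∈ Finset.univ.filter (fun n : 𝒩 => 0 < μ {ω | N ω = n}),
        (μ[|{ω | I ω = i ∧ N ω = n}]) {ω | O ω = o} * μ {ω | N ω = n} := by
  have key := triple_indep μ hN hη hε h_indep
  set P : 𝒩 → ℝ≥0∞ := fun n => μ {ω | N ω = n} with hP
  set Q : 𝒩 → ℝ≥0∞ := fun n => μ {ω | g (n, η ω) = i} with hQ
  set R : 𝒩 → ℝ≥0∞ := fun n => μ {ω | f (i, n, ε ω) = o} with hR
  -- measure of joint treatment-confounder event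
  have hs_eq : ∀ n, {ω | I ω = i ∧ N ω = n} =
      {ω | N ω = n ∧ g (n, η ω) = i ∧ (fun _ : ℰ => True) (ε ω)} := by
    intro n; ext ω
    simp only [Set.mem_setOf_eq, hI, and_true]
    constructor
    · rintro ⟨h1, h2⟩; subst h2; exact ⟨rfl, h1⟩
    · rintro ⟨h1, h2⟩; subst h1; exact ⟨h2, rfl⟩
  have hs : ∀ n, μ {ω | I ω = i ∧ N ω = n} = P n * Q n := by
    intro n
    rw [hs_eq n, key n (fun u => g (n, u) = i) (fun _ => True)]
    have : {ω | (fun _ : ℰ => True) (ε ω)} = Set.univ := by ext ω; simp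
    rw [this, measure_univ, mul_one]
  -- measure of joint treatment-confounder-outcome event
  have hst : ∀ n, μ ({ω | I ω = i ∧ N ω = n} ∩ {ω | O ω = o}) = P n * Q n * R n := by
    intro n
    have hset : {ω | I ω = i ∧ N ω = n} ∩ {ω | O ω = o} =
        {ω | N ω = n ∧ g (n, η ω) = i ∧ f (i, n, ε ω) = o} := by
      ext ω
      simp only [Set.mem_inter_iff, Set.mem_setOf_eq, hI, hO]
      constructor
      · rintro ⟨⟨h1, h2⟩, h3⟩; subst h2; rw [h1] at h3; exact ⟨rfl, h1, h3⟩
      · rintro ⟨h1, h2, h3⟩; subst h1; exact ⟨⟨h2, rfl⟩, by rw [h2]; exact h3⟩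
    rw [hset, key n (fun u => g (n, u) = i) (fun e => f (i, n, e) = o)]
  -- the conditional-probability term simplifies
  have hImeas : Measurable I := by
    have : I = fun ω => g (N ω, η ω) := funext hI
    rw [this]; exact hg.comp (hN.prodMk hη)
  have hcond : ∀ n ∈ Finset.univ.filter (fun n : 𝒩 => 0 < μ {ω | N ω = n}),
      (μ[|{ω | I ω = i ∧ N ω = n}]) {ω | O ω = o} * μ {ω | N ω = n} = P n * R n := by
    intro n hn
    rw [Finset.mem_filter] at hn
    have hmeas : MeasurableSet {ω | I ω = i ∧ N ω = n} :=
      (hImeas (measurableSet_singleton i)).inter (hN (measurableSet_singleton n))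
    rw [ProbabilityTheory.cond_apply hmeas, hst n, hs n]
    have h0 : P n * Q n ≠ 0 := by
      rw [← hs n]; exact (hpos n hn.2).ne'
    have htop : P n * Q n ≠ ⊤ := by
      rw [← hs n]; exact (measure_lt_top μ _).ne
    rw [← mul_assoc ((P n * Q n)⁻¹) (P n * Q n) (R n),
      ENNReal.inv_mul_cancel h0 htop, one_mul]
    exact mul_comm _ _
  rw [Finset.sum_congr rfl hcond]
  -- decompose the left-hand side by the value of the confounder
  have h2 : ∀ n, μ {ω | N ω = n ∧ f (i, n, ε ω) = o} = P n * R n := by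
    intro n
    have hset : {ω | N ω = n ∧ f (i, n, ε ω) = o} =
        {ω | N ω = n ∧ (fun _ : 𝒰 => True) (η ω) ∧ f (i, n, ε ω) = o} := by
      ext ω; simp
    rw [hset, key n (fun _ => True) (fun e => f (i, n, e) = o)]
    have : {ω | (fun _ : 𝒰 => True) (η ω)} = Set.univ := by ext ω; simp
    rw [this, measure_univ, mul_one]
  have hdecomp : {ω | f (i, N ω, ε ω) = o} =
      ⋃ n ∈ (Finset.univ : Finset 𝒩), {ω | N ω = n ∧ f (i, n, ε ω) = o} := by
    ext ω
    simp only [Set.mem_setOf_eq, Set.mem_iUnion, Finset.mem_univ, true_and,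
      Set.mem_setOf_eq, exists_prop]
    constructor
    · intro h; exact ⟨N ω, rfl, h⟩
    · rintro ⟨n, h1, h2⟩; rw [h1]; exact h2
  have hLHS : μ {ω | f (i, N ω, ε ω) = o} = ∑ n : 𝒩, P n * R n := by
    rw [hdecomp, measure_biUnion_finset]
    · exact Finset.sum_congr rfl fun n _ => h2 n
    · intro a _ b _ hab
      refine Set.disjoint_left.2 fun ω hω1 hω2 => hab ?_
      simp only [Set.mem_setOf_eq] at hω1 hω2
      rw [← hω1.1, ← hω2.1]
    · intro n _
      show MeasurableSet ({ω | N ω = n} ∩ ε ⁻¹' {e | f (i, n, e) = o})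
      exact (hN (measurableSet_singleton n)).inter
        (hε (Set.toFinite {e | f (i, n, e) = o}).measurableSet)
  rw [hLHS]
  symm
  refine Finset.sum_filter_of_ne fun n _ hne => ?_
  rw [pos_iff_ne_zero]
  intro h0
  exact hne (by rw [show P n = 0 from h0, zero_mul])
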